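/- Let F be a field of characteristic not p containing a primitive p-th root of unity, K = F(a^{1/p}) cyclic of degree p, J = K^×/(K^×)^p, J_1 = J^G, and let ⟨[a]⟩ be the subgroup of F^×/(F^×)^p generated by the class of a. Then the sequence 0 → ⟨[a]⟩ → F^×/(F^×)^p → J_1 → ⟨[a]⟩ is exact, where the first map is inclusion, the second is induced by F^× ⊆ K^×, and the third is induced by the norm N : K^× → F^×. -/

import Mathlib

noncomputable section

namespace KummerSetup

variable (p : ℕ) (F K : Type) [Field F] [Field K] [Algebra F K]

/-- The subgroup of `p`-th powers in `Kˣ`. -/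
def powSub : Subgroup Kˣ := (powMonoidHom p : Kˣ →* Kˣ).range

/-- `J = Kˣ/(Kˣ)^p`. -/
abbrev Jgrp := Kˣ ⧸ powSub p K

/-- The class of a unit in `J`. -/
def mkJ : Kˣ →* Jgrp p K := QuotientGroup.mk' (powSub p K)

/-- Action of an `F`-automorphism of `K` on units. -/
def galU (τ : K ≃ₐ[F] K) : Kˣ →* Kˣ := Units.map (τ.toAlgHom.toRingHom.toMonoidHom)

lemma powSub_le (τ : K ≃ₐ[F] K) : powSub p K ≤ (powSub p K).comap (galU F K τ) := by
  rintro x ⟨y, rfl⟩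
  exact ⟨galU F K τ y, by simp [powMonoidHom, map_pow]⟩

/-- The induced action of an `F`-automorphism of `K` on `J = Kˣ/(Kˣ)^p`. -/
def galJ (τ : K ≃ₐ[F] K) : Jgrp p K →* Jgrp p K :=
  QuotientGroup.map _ _ (galU F K τ) (powSub_le p F K τ)

/-- The subgroup `J^G` of `J` fixed by all of `Gal(K/F)`. -/
def fixedJ : Subgroup (Jgrp p K) where
  carrier := {x | ∀ τ : K ≃ₐ[F] K, galJ p F K τ x = x}
  one_mem' := fun τ => map_one _
  mul_mem' := by intro a b ha hb τ; rw [map_mul, ha τ, hb τ]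
  inv_mem' := by intro a ha τ; rw [map_inv, ha τ]

/-- The norm on units, `N : Kˣ →* Fˣ`. -/
def normU : Kˣ →* Fˣ := Units.map (Algebra.norm F : K →* F)

/-- The natural map `Fˣ →* Kˣ`. -/
def incU : Fˣ →* Kˣ := Units.map (algebraMap F K).toMonoidHom

/-- `ε : Fˣ →* J`, with image `ε(F^×) = F^×·(K^×)^p/(K^×)^p`. -/
def epsF : Fˣ →* Jgrp p K := (mkJ p K).comp (incU F K)

/-- `F^×/(F^×)^p`. -/
abbrev QF := Fˣ ⧸ powSub p F

/-- The map `F^×/(F^×)^p → J` induced by `F ⊆ K`. -/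
def epsQ : QF p F →* Jgrp p K :=
  QuotientGroup.map _ _ (incU F K) (by rintro x ⟨y, rfl⟩; exact ⟨incU F K y, by simp [powMonoidHom, map_pow]⟩)

/-- The map `J → F^×/(F^×)^p` induced by the norm. -/
def normJ : Jgrp p K →* QF p F :=
  QuotientGroup.map _ _ (normU F K) (by rintro x ⟨y, rfl⟩; exact ⟨normU F K y, by simp [powMonoidHom, map_pow]⟩)

/-- The cyclic `𝔽_p[G]`-submodule `M_γ` of `J` generated by the class of `γ`:
the subgroup generated by the `σ`-orbit of `[γ]`. -/
def Mgam (σ : K ≃ₐ[F] K) (γ : Kˣ) : Subgroup (Jgrp p K) :=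
  Subgroup.closure {x | ∃ k : ℕ, (galJ p F K (σ ^ k)) (mkJ p K γ) = x}

end KummerSetup

end

open KummerSetup

/-!
Since `[K : F] = p` is prime and `σ α = ξ α` with `ξ ≠ 1`, the automorphism `σ` generates
`Gal(K/F)`. If `b ∈ Fˣ` becomes a `p`-th power `yᵖ` in `K`, then `σ y / y = ξʲ` for some `j`,
so `y / αʲ` lies in `F` and `b ∈ aʲ (Fˣ)ᵖ`.

A class `[β] ∈ J^G` satisfies `σ β = β γᵖ`. With the partial norms `N_k γ = ∏_{i<k} σⁱ γ` and
`Δ = ∏_{k<p} N_k γ`, telescoping gives `N β = (β Δ)ᵖ`, so the norm of `[β]` lies in `⟨[a]⟩`.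
If moreover `N β = cᵖ` with `c ∈ F`, then `β Δ / c` is a `p`-th root of unity, so `β Δ ∈ F`.
As `σ Δ = Δ · N γ · γ⁻ᵖ`, this forces `N γ = 1`; Hilbert 90 gives `σ ρ = γ ρ`, the element
`Δ ρᵖ` is `σ`-fixed, and `β = (β Δ) (Δ ρᵖ)⁻¹ ρᵖ ∈ Fˣ (Kˣ)ᵖ`.
-/

open Finset

theorem prod_univ_eq_prod_range_orderOf {G M : Type*} [Group G] [Fintype G] [CommMonoid M]
    {g : G} (hg : ∀ x, x ∈ Subgroup.zpowers g) (f : G → M) :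
    ∏ x, f x = ∏ k ∈ range (orderOf g), f (g ^ k) := by
  classical
  rw [← IsCyclic.image_range_orderOf hg, prod_image fun i hi j hj hij ↦
    pow_injOn_Iio_orderOf (by simpa using hi) (by simpa using hj) hij]

namespace KummerSetup

section Units

variable {F K : Type} [Field F] [Field K] [Algebra F K]

@[simp]
lemma coe_galU (τ : K ≃ₐ[F] K) (x : Kˣ) : (galU F K τ x : K) = τ x := rfl

@[simp]
lemma coe_incU (b : Fˣ) : (incU F K b : K) = algebraMap F K b := rfl

@[simp]
lemma coe_normU (x : Kˣ) : (normU F K x : F) = Algebra.norm F (x : K) := rfl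

lemma galU_one_apply (x : Kˣ) : galU F K 1 x = x := rfl

lemma galU_mul_apply (τ τ' : K ≃ₐ[F] K) (x : Kˣ) :
    galU F K (τ * τ') x = galU F K τ (galU F K τ' x) := rfl

lemma galU_incU (τ : K ≃ₐ[F] K) (b : Fˣ) : galU F K τ (incU F K b) = incU F K b :=
  Units.ext (τ.commutes b)

variable (F K) in
lemma incU_injective : Function.Injective (incU F K) :=
  Units.map_injective (algebraMap F K).injective

lemma normU_incU (b : Fˣ) : normU F K (incU F K b) = b ^ Module.finrank F K :=
  Units.ext (by simp [Algebra.norm_algebraMap])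

lemma pow_mem_powSub (n : ℕ) (y : Kˣ) : y ^ n ∈ powSub n K := ⟨y, rfl⟩

lemma mkJ_surjective (n : ℕ) : Function.Surjective (mkJ n K) := QuotientGroup.mk'_surjective _

lemma mkJ_eq_one_iff {n : ℕ} {x : Kˣ} : mkJ n K x = 1 ↔ x ∈ powSub n K :=
  QuotientGroup.eq_one_iff x

lemma epsQ_mk (n : ℕ) (b : Fˣ) :
    epsQ n F K (QuotientGroup.mk b) = mkJ n K (incU F K b) := rfl

lemma normJ_mkJ (n : ℕ) (x : Kˣ) :
    normJ n F K (mkJ n K x) = QuotientGroup.mk (normU F K x) := rfl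

lemma exists_galU_eq_mul_pow_of_mem_fixedJ {n : ℕ} {β : Kˣ} (hβ : mkJ n K β ∈ fixedJ n F K)
    (τ : K ≃ₐ[F] K) : ∃ γ : Kˣ, galU F K τ β = β * γ ^ n := by
  obtain ⟨γ, hγ⟩ := QuotientGroup.eq.mp (hβ τ).symm
  exact ⟨γ, by rw [← powMonoidHom_apply, hγ, mul_inv_cancel_left]⟩

end Units

section PartialNorm

variable {F K : Type} [Field F] [Field K] [Algebra F K] (σ : K ≃ₐ[F] K)

def partialNorm (γ : Kˣ) (k : ℕ) : Kˣ := ∏ i ∈ range k, galU F K (σ ^ i) γ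

lemma partialNorm_zero (γ : Kˣ) : partialNorm σ γ 0 = 1 := prod_range_zero _

lemma galU_partialNorm (γ : Kˣ) (k : ℕ) :
    galU F K σ (partialNorm σ γ k) = partialNorm σ γ (k + 1) * γ⁻¹ := by
  rw [partialNorm, partialNorm, prod_range_succ', map_prod]
  simp only [pow_succ', galU_mul_apply, pow_zero, galU_one_apply, mul_inv_cancel_right]

lemma galU_prod_partialNorm (γ : Kˣ) (n : ℕ) :
    galU F K σ (∏ k ∈ range n, partialNorm σ γ k) =
      (∏ k ∈ range n, partialNorm σ γ k) * partialNorm σ γ n * (γ ^ n)⁻¹ := by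
  rw [map_prod, prod_congr rfl fun k _ ↦ galU_partialNorm σ γ k, prod_mul_distrib, prod_const,
    card_range, ← prod_range_succ, prod_range_succ', partialNorm_zero, mul_one, inv_pow]

lemma galU_pow_eq_mul_partialNorm_pow {n : ℕ} {β γ : Kˣ} (h : galU F K σ β = β * γ ^ n)
    (k : ℕ) : galU F K (σ ^ k) β = β * partialNorm σ γ k ^ n := by
  induction k with
  | zero => rw [pow_zero, galU_one_apply, partialNorm_zero, one_pow, mul_one]
  | succ k ih =>
    rw [pow_succ', galU_mul_apply, ih, map_mul, h, map_pow, galU_partialNorm, mul_assoc, ← mul_pow,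
      mul_comm γ, inv_mul_cancel_right]

end PartialNorm

section Cyclic

variable {F K : Type} [Field F] [Field K] [Algebra F K] [FiniteDimensional F K] [IsGalois F K]
  {σ : K ≃ₐ[F] K} (hσ : ∀ τ, τ ∈ Subgroup.zpowers σ)
include hσ

lemma mem_range_incU_of_galU_eq {u : Kˣ} (hu : galU F K σ u = u) : u ∈ (incU F K).range := by
  have hfix : Subgroup.zpowers σ ≤ MulAction.stabilizer (K ≃ₐ[F] K) (u : K) :=
    Subgroup.zpowers_le.mpr (congrArg Units.val hu)
  obtain ⟨b, hb⟩ := (IsGalois.mem_range_algebraMap_iff_fixed (u : K)).mpr fun τ ↦ hfix (hσ τ)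
  exact ⟨Units.mk0 b fun hb0 ↦ u.ne_zero (by rw [← hb, hb0, map_zero]), Units.ext hb⟩

lemma incU_normU_eq_partialNorm (x : Kˣ) :
    incU F K (normU F K x) = partialNorm σ x (orderOf σ) := by
  apply Units.ext
  rw [coe_incU, coe_normU, Algebra.norm_eq_prod_automorphisms,
    prod_univ_eq_prod_range_orderOf hσ, partialNorm, Units.coe_prod]
  rfl

lemma incU_normU_eq_pow_of_galU_eq {n : ℕ} (hn : orderOf σ = n) {β γ : Kˣ}
    (hβ : galU F K σ β = β * γ ^ n) :
    incU F K (normU F K β) = (β * ∏ k ∈ range n, partialNorm σ γ k) ^ n := by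
  rw [incU_normU_eq_partialNorm hσ, hn, partialNorm,
    prod_congr rfl fun k _ ↦ galU_pow_eq_mul_partialNorm_pow σ hβ k, prod_mul_distrib,
    prod_const, card_range, prod_pow, mul_pow]

lemma exists_galU_eq_mul_of_normU_eq_one {γ : Kˣ} (hγ : normU F K γ = 1) :
    ∃ ρ : Kˣ, galU F K σ ρ = γ * ρ := by
  have : IsCyclic (K ≃ₐ[F] K) := ⟨σ, fun τ ↦ Subgroup.mem_zpowers_iff.mp (hσ τ)⟩
  have hγ' : Algebra.norm F ((γ⁻¹ : Kˣ) : K) = 1 := by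
    rw [Units.val_inv_eq_inv_val, Algebra.norm_inv, ← coe_normU, hγ, Units.val_one, inv_one]
  obtain ⟨ρ, hρ⟩ := groupCohomology.exists_div_of_norm_eq_one hσ hγ'
  refine ⟨ρ, Units.ext ?_⟩
  rw [div_eq_iff (by simp), Units.val_inv_eq_inv_val] at hρ
  rw [coe_galU, Units.val_mul, eq_comm, ← eq_inv_mul_iff_mul_eq₀ γ.ne_zero]
  exact hρ

end Cyclic

section Kummer

variable {F K : Type} [Field F] [Field K] [Algebra F K] {n : ℕ}

lemma exists_incU_pow_eq_of_pow_eq_one [NeZero n] {ξ : Fˣ} (hξ : IsPrimitiveRoot ξ n) {u : Kˣ}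
    (hu : u ^ n = 1) : ∃ j : ℕ, incU F K ξ ^ j = u := by
  have hξK : IsPrimitiveRoot (incU F K ξ : K) n :=
    IsPrimitiveRoot.coe_units_iff.mpr (hξ.map_of_injective (incU_injective F K))
  obtain ⟨j, -, hj⟩ := hξK.eq_pow_of_pow_eq_one (ξ := (u : K))
    (by rw [← Units.val_pow_eq_pow_val, hu, Units.val_one])
  exact ⟨j, Units.ext (by rw [Units.val_pow_eq_pow_val, hj])⟩

variable [FiniteDimensional F K] [IsGalois F K] {σ : K ≃ₐ[F] K} (hσ : ∀ τ, τ ∈ Subgroup.zpowers σ)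
include hσ

section Radical

variable [NeZero n] {ξ : Fˣ} (hξ : IsPrimitiveRoot ξ n) {a : Fˣ} {α : Kˣ}
  (hα : α ^ n = incU F K a) (hσα : galU F K σ α = incU F K ξ * α)
include hξ hα hσα

lemma exists_eq_pow_mul_pow_of_incU_eq_pow {b : Fˣ} {y : Kˣ} (hy : y ^ n = incU F K b) :
    ∃ (w : Fˣ) (j : ℕ), b = w ^ n * a ^ j := by
  have hroot : (galU F K σ y * y⁻¹) ^ n = 1 := by
    rw [mul_pow, ← map_pow, hy, galU_incU, inv_pow, hy, mul_inv_cancel]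
  obtain ⟨j, hj⟩ := exists_incU_pow_eq_of_pow_eq_one hξ hroot
  have hfix : galU F K σ (y * (α ^ j)⁻¹) = y * (α ^ j)⁻¹ := by
    rw [map_mul, map_inv, map_pow, hσα, mul_pow, hj]
    simp [mul_comm, mul_left_comm]
  obtain ⟨w, hw⟩ := mem_range_incU_of_galU_eq hσ hfix
  refine ⟨w, j, incU_injective F K ?_⟩
  rw [map_mul, map_pow, map_pow, hw, ← hα, ← hy, mul_pow, inv_pow, ← pow_mul, ← pow_mul,
    mul_comm j n, inv_mul_cancel_right]

lemma ker_epsQ_eq_closure :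
    (epsQ n F K).ker = Subgroup.closure {QuotientGroup.mk' (powSub n F) a} := by
  apply le_antisymm
  · intro x hx
    obtain ⟨b, rfl⟩ := QuotientGroup.mk'_surjective _ x
    obtain ⟨y, hy⟩ := mkJ_eq_one_iff.mp hx
    obtain ⟨w, j, rfl⟩ := exists_eq_pow_mul_pow_of_incU_eq_pow hσ hξ hα hσα hy
    have hmk : QuotientGroup.mk' (powSub n F) (w ^ n * a ^ j) = QuotientGroup.mk' _ a ^ j := by
      rw [mul_comm, ← map_pow]
      exact QuotientGroup.mk_mul_of_mem _ (pow_mem_powSub n w)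
    rw [hmk]
    exact Subgroup.pow_mem _ (Subgroup.mem_closure_singleton_self _) j
  · rw [Subgroup.closure_le, Set.singleton_subset_iff]
    exact mkJ_eq_one_iff.mpr ⟨α, hα⟩

end Radical

end Kummer

section FixedClasses

variable {F K : Type} [Field F] [Field K] [Algebra F K] {n : ℕ}

lemma normJ_epsQ (hn : Module.finrank F K = n) (q : QF n F) : normJ n F K (epsQ n F K q) = 1 := by
  obtain ⟨b, rfl⟩ := QuotientGroup.mk'_surjective _ q
  rw [QuotientGroup.mk'_apply, epsQ_mk, normJ_mkJ, normU_incU, hn]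
  exact (QuotientGroup.eq_one_iff _).mpr (pow_mem_powSub n b)

lemma partialNorm_eq_one_of_mul_prod_mem_range_incU {σ : K ≃ₐ[F] K} {β γ : Kˣ}
    (hγ : galU F K σ β = β * γ ^ n)
    (hθ : β * ∏ k ∈ range n, partialNorm σ γ k ∈ (incU F K).range) : partialNorm σ γ n = 1 := by
  obtain ⟨e, he⟩ := hθ
  have hfix := galU_incU σ e
  rw [he, map_mul, hγ, galU_prod_partialNorm] at hfix
  simpa [mul_comm, mul_left_comm] using hfix

variable [FiniteDimensional F K] [IsGalois F K] {σ : K ≃ₐ[F] K}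
  (hσ : ∀ τ, τ ∈ Subgroup.zpowers σ) (hn : orderOf σ = n)
include hσ hn

lemma normJ_mem_ker_epsQ {x : Jgrp n K} (hx : x ∈ fixedJ n F K) :
    normJ n F K x ∈ (epsQ n F K).ker := by
  obtain ⟨β, rfl⟩ := mkJ_surjective n x
  obtain ⟨γ, hγ⟩ := exists_galU_eq_mul_pow_of_mem_fixedJ hx σ
  rw [MonoidHom.mem_ker, normJ_mkJ, epsQ_mk, mkJ_eq_one_iff,
    incU_normU_eq_pow_of_galU_eq hσ hn hγ]
  exact pow_mem_powSub n _

lemma mul_prod_partialNorm_mem_range_incU [NeZero n] {ξ : Fˣ} (hξ : IsPrimitiveRoot ξ n)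
    {β γ : Kˣ} (hγ : galU F K σ β = β * γ ^ n) (hβ : normU F K β ∈ powSub n F) :
    β * ∏ k ∈ range n, partialNorm σ γ k ∈ (incU F K).range := by
  obtain ⟨c, hc⟩ := hβ
  have hroot : ((β * ∏ k ∈ range n, partialNorm σ γ k) * (incU F K c)⁻¹) ^ n = 1 := by
    rw [mul_pow, ← incU_normU_eq_pow_of_galU_eq hσ hn hγ, inv_pow, ← map_pow, ← powMonoidHom_apply,
      hc, mul_inv_cancel]
  obtain ⟨j, hj⟩ := exists_incU_pow_eq_of_pow_eq_one hξ hroot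
  exact ⟨ξ ^ j * c, by rw [map_mul, map_pow, hj, inv_mul_cancel_right]⟩

lemma exists_prod_partialNorm_mul_pow_mem_range_incU {γ : Kˣ} (hγ : partialNorm σ γ n = 1) :
    ∃ ρ : Kˣ, (∏ k ∈ range n, partialNorm σ γ k) * ρ ^ n ∈ (incU F K).range := by
  have hnorm : normU F K γ = 1 :=
    incU_injective F K (by rw [incU_normU_eq_partialNorm hσ, hn, hγ, map_one])
  obtain ⟨ρ, hρ⟩ := exists_galU_eq_mul_of_normU_eq_one hσ hnorm
  refine ⟨ρ, mem_range_incU_of_galU_eq hσ ?_⟩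
  rw [map_mul, map_pow, galU_prod_partialNorm, hγ, hρ, mul_pow, mul_one, mul_assoc,
    inv_mul_cancel_left]

lemma mem_range_epsQ_of_normJ_eq_one [NeZero n] {ξ : Fˣ} (hξ : IsPrimitiveRoot ξ n)
    {x : Jgrp n K} (hx : x ∈ fixedJ n F K) (h1 : normJ n F K x = 1) : x ∈ (epsQ n F K).range := by
  obtain ⟨β, rfl⟩ := mkJ_surjective n x
  obtain ⟨γ, hγ⟩ := exists_galU_eq_mul_pow_of_mem_fixedJ hx σ
  obtain ⟨e, he⟩ :=
    mul_prod_partialNorm_mem_range_incU hσ hn hξ hγ ((QuotientGroup.eq_one_iff _).mp h1)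
  obtain ⟨ρ, w, hw⟩ := exists_prod_partialNorm_mul_pow_mem_range_incU hσ hn
    (partialNorm_eq_one_of_mul_prod_mem_range_incU hγ ⟨e, he⟩)
  refine ⟨QuotientGroup.mk (e * w⁻¹), ?_⟩
  rw [epsQ_mk]
  refine QuotientGroup.eq.mpr ⟨ρ, ?_⟩
  rw [powMonoidHom_apply, map_mul, map_inv, he, hw]
  simp [mul_comm, mul_left_comm, mul_assoc]

end FixedClasses

lemma forall_mem_zpowers_of_galU_eq_mul {F K : Type} [Field F] [Field K] [Algebra F K] {p : ℕ}
    [Fact p.Prime] (hcard : Nat.card (K ≃ₐ[F] K) = p) {σ : K ≃ₐ[F] K} {ξ : Fˣ} (hξ : ξ ≠ 1)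
    {α : Kˣ} (hσα : galU F K σ α = incU F K ξ * α) : ∀ τ, τ ∈ Subgroup.zpowers σ := by
  refine fun τ ↦ mem_zpowers_of_prime_card hcard fun hσ ↦ hξ (incU_injective F K ?_)
  rw [hσ, galU_one_apply, eq_comm, mul_eq_right] at hσα
  rw [hσα, map_one]

end KummerSetup

theorem exact_sequence_J1_general
    (p : ℕ) [Fact p.Prime] (F K : Type) [Field F] [Field K] [Algebra F K]
    (ξ : F) (hξ : IsPrimitiveRoot ξ p)
    (a : F) (ua : Fˣ) (hua : (ua : F) = a) (α : K) (hα : α ^ p = algebraMap F K a)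
    [IsGalois F K] (hdeg : Module.finrank F K = p)
    (σ : K ≃ₐ[F] K) (hσ : σ α = algebraMap F K ξ * α) :
    (epsQ p F K).ker = Subgroup.closure {QuotientGroup.mk' (powSub p F) ua} ∧
    (∀ x ∈ fixedJ p F K,
      normJ p F K x ∈ Subgroup.closure {QuotientGroup.mk' (powSub p F) ua}) ∧
    (∀ x ∈ fixedJ p F K,
      (normJ p F K x = 1 ↔ x ∈ (epsQ p F K).range)) := by
  have hp : p.Prime := Fact.out
  have : NeZero p := ⟨hp.ne_zero⟩
  have : FiniteDimensional F K := .of_finrank_pos (hdeg ▸ hp.pos)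
  set ξu := (hξ.isUnit hp.ne_zero).unit
  have hξu : IsPrimitiveRoot ξu p := IsPrimitiveRoot.coe_units_iff.mp hξ
  set αu := Units.mk0 α fun h ↦ ua.ne_zero (by simpa [h, hp.ne_zero, hua] using hα.symm)
  have hαu : αu ^ p = incU F K ua := Units.ext (by simp [αu, hα, hua])
  have hσα : galU F K σ αu = incU F K ξu * αu := Units.ext (by simp [αu, ξu, hσ])
  have hgen := forall_mem_zpowers_of_galU_eq_mul ((IsGalois.card_aut_eq_finrank F K).trans hdeg)
    (hξu.ne_one hp.one_lt) hσα
  have hord : orderOf σ = p := by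
    rw [orderOf_eq_card_of_forall_mem_zpowers hgen, IsGalois.card_aut_eq_finrank, hdeg]
  have hker := ker_epsQ_eq_closure hgen hξu hαu hσα
  refine ⟨hker, fun x hx ↦ hker ▸ normJ_mem_ker_epsQ hgen hord hx, fun x hx ↦
    ⟨mem_range_epsQ_of_normJ_eq_one hgen hord hξu hx, ?_⟩⟩
  rintro ⟨q, rfl⟩
  exact normJ_epsQ hdeg q

/-- Exactness of `0 → ⟨[a]⟩ → F^×/(F^×)^p → J_1 → ⟨[a]⟩`, where the middle map is induced
by `F ⊆ K` and the last map by the norm `N : Kˣ → Fˣ`.  Concretely: the kernel of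
`F^×/(F^×)^p → J` is the subgroup generated by the class of `a`; the norm maps `J_1` into
`⟨[a]⟩`; and an element of `J_1` has trivial induced norm iff it comes from `F^×/(F^×)^p`. -/
theorem exact_sequence_J1
    (p : ℕ) [Fact p.Prime] (F K : Type) [Field F] [Field K] [Algebra F K]
    (hchar : (p : F) ≠ 0) (ξ : F) (hξ : IsPrimitiveRoot ξ p)
    (a : F) (ua : Fˣ) (hua : (ua : F) = a) (α : K) (hα : α ^ p = algebraMap F K a)
    (hadj : Algebra.adjoin F {α} = ⊤)
    [IsGalois F K] (hdeg : Module.finrank F K = p)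
    (σ : K ≃ₐ[F] K) (hσ : σ α = algebraMap F K ξ * α) :
    (epsQ p F K).ker = Subgroup.closure {QuotientGroup.mk' (powSub p F) ua} ∧
    (∀ x ∈ fixedJ p F K,
      normJ p F K x ∈ Subgroup.closure {QuotientGroup.mk' (powSub p F) ua}) ∧
    (∀ x ∈ fixedJ p F K,
      (normJ p F K x = 1 ↔ x ∈ (epsQ p F K).range)) :=
  exact_sequence_J1_general p F K ξ hξ a ua hua α hα hdeg σ hσ
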